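/- arXiv:2105.06553 — 2 statements merged into one kernel-verified Lean document; each statement's English description precedes it below -/
import Mathlib

section
/- Let k ≥ 4 be even and N > 3k/2. The graph C_{N,k,N}, obtained from the circulant graph C_{N,k} by attaching one pendant vertex to every vertex, has clustering coefficient equal to 3(k-2)/(8(k+1)). -/
open scoped Classical

/-- Circular distance between two elements of `ZMod N`. -/
def circDist {N : ℕ} (i j : ZMod N) : ℕ := min (i - j).val (j - i).val

/-- The circulant graph `C_{N,k}`: vertices `ZMod N`, `i ~ j` iff the circular
distance between `i` and `j` lies in `{1, ..., k/2}`. -/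
def circulant (N k : ℕ) : SimpleGraph (ZMod N) where
  Adj i j := 1 ≤ circDist i j ∧ circDist i j ≤ k / 2
  symm := by constructor; intro i j h; simpa [circDist, min_comm] using h
  loopless := by constructor; intro i h; simp [circDist] at h

/-- Number of edges among the neighbors of `v`. -/
noncomputable def nbrEdges {V : Type*} [Fintype V] (G : SimpleGraph V) (v : V) : ℕ :=
  (Finset.univ.filter fun p : V × V => G.Adj v p.1 ∧ G.Adj v p.2 ∧ G.Adj p.1 p.2).card / 2

/-- Local clustering coefficient of a vertex. -/
noncomputable def localClustering {V : Type*} [Fintype V] (G : SimpleGraph V) (v : V) : ℚ :=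
  (nbrEdges G v : ℚ) / ((G.degree v).choose 2 : ℚ)

/-- (Average) clustering coefficient of a graph. -/
noncomputable def clusteringCoeff {V : Type*} [Fintype V] (G : SimpleGraph V) : ℚ :=
  (∑ v, localClustering G v) / (Fintype.card V : ℚ)

/-- Type I generalized circulant graph `C_{N,k,m,s}`: attach `s` pendant vertices to
each of the first `m` vertices of the circulant graph `C_{N,k}`. -/
def typeI (N k m s : ℕ) : SimpleGraph (ZMod N ⊕ Fin m × Fin s) where
  Adj a b :=
    (∃ i j : ZMod N, a = Sum.inl i ∧ b = Sum.inl j ∧ (circulant N k).Adj i j) ∨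
    (∃ (p : Fin m) (q : Fin s),
      (a = Sum.inl ((p : ℕ) : ZMod N) ∧ b = Sum.inr (p, q)) ∨
      (b = Sum.inl ((p : ℕ) : ZMod N) ∧ a = Sum.inr (p, q)))
  symm := by
    constructor
    rintro a b (⟨i, j, rfl, rfl, h⟩ | ⟨p, q, h⟩)
    · exact Or.inl ⟨j, i, rfl, rfl, h.symm⟩
    · exact Or.inr ⟨p, q, h.symm⟩
  loopless := by
    constructor
    rintro a (⟨i, j, rfl, h2, h⟩ | ⟨p, q, ⟨h1, h2⟩ | ⟨h1, h2⟩⟩)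
    · cases h2; exact (circulant N k).irrefl h
    · subst h1; simp at h2
    · subst h1; simp at h2

lemma circulant_adj {N k : ℕ} {i j : ZMod N} :
    (circulant N k).Adj i j ↔ 1 ≤ circDist i j ∧ circDist i j ≤ k / 2 := Iff.rfl

lemma typeI_adj_inl_inl {N k m s : ℕ} {i j : ZMod N} :
    (typeI N k m s).Adj (Sum.inl i) (Sum.inl j) ↔ (circulant N k).Adj i j := by
  constructor
  · rintro (⟨i', j', hi, hj, ha⟩ | ⟨p, q, ⟨h1, h2⟩ | ⟨h1, h2⟩⟩)
    · rw [Sum.inl.injEq] at hi hj; subst hi; subst hj; exact ha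
    · simp at h2
    · simp at h2
  · intro ha
    exact Or.inl ⟨i, j, rfl, rfl, ha⟩

lemma typeI_adj_inr {N k m s : ℕ} {z : Fin m × Fin s} {x : ZMod N ⊕ Fin m × Fin s} :
    (typeI N k m s).Adj (Sum.inr z) x ↔ x = Sum.inl (((z.1 : ℕ) : ZMod N)) := by
  constructor
  · rintro (⟨i, j, hi, hj, ha⟩ | ⟨p, q, ⟨h1, h2⟩ | ⟨h1, h2⟩⟩)
    · simp at hi
    · simp at h1
    · rw [Sum.inr.injEq] at h2
      subst h2
      exact h1
  · rintro rfl
    exact Or.inr ⟨z.1, z.2, Or.inr ⟨rfl, by simp⟩⟩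

lemma typeI_adj_inl_inr {N k m s : ℕ} {i : ZMod N} {z : Fin m × Fin s} :
    (typeI N k m s).Adj (Sum.inl i) (Sum.inr z) ↔ ((z.1 : ℕ) : ZMod N) = i := by
  rw [(typeI N k m s).adj_comm, typeI_adj_inr, Sum.inl.injEq, eq_comm]

lemma emod_eq_of_small {N : ℕ} (d : ℤ) (h1 : -(N:ℤ) < d) (h2 : d < N) :
    d % N = if 0 ≤ d then d else d + N := by
  split_ifs with hd
  · exact Int.emod_eq_of_lt hd h2
  · have : (d + (N:ℤ) * 1) % N = d % N := Int.add_mul_emod_self_left ..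
    rw [mul_one] at this
    rw [← this]
    exact Int.emod_eq_of_lt (by omega) (by omega)

lemma circ_adj_iff {N h : ℕ} [NeZero N] (hN : 3*h < N) {a b : ℤ}
    (ha : a.natAbs ≤ h) (hb : b.natAbs ≤ h) :
    (circulant N (2*h)).Adj (a : ZMod N) (b : ZMod N) ↔ a ≠ b ∧ (a - b).natAbs ≤ h := by
  rw [circulant_adj]
  unfold circDist
  have e1 : ((a : ZMod N) - b) = ((a - b : ℤ) : ZMod N) := by push_cast; ring
  have e2 : ((b : ZMod N) - a) = ((b - a : ℤ) : ZMod N) := by push_cast; ring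
  rw [e1, e2]
  have v1 := ZMod.val_intCast (n := N) (a - b)
  have v2 := ZMod.val_intCast (n := N) (b - a)
  rw [emod_eq_of_small (a - b) (by omega) (by omega)] at v1
  rw [emod_eq_of_small (b - a) (by omega) (by omega)] at v2
  set x := (((a - b : ℤ) : ZMod N)).val with hx
  set y := (((b - a : ℤ) : ZMod N)).val with hy
  split_ifs at v1 v2 <;>
  · rcases Nat.le_total x y with hxy | hxy
    · rw [min_eq_left hxy]; omega
    · rw [min_eq_right hxy]; omega

lemma cast_inj_of_small {N h : ℕ} [NeZero N] (hN : 3*h < N) {a b : ℤ}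
    (ha : a.natAbs ≤ h) (hb : b.natAbs ≤ h) (hab : (a : ZMod N) = b) : a = b := by
  have v1 := ZMod.val_intCast (n := N) a
  have v2 := ZMod.val_intCast (n := N) b
  rw [hab] at v1
  rw [emod_eq_of_small a (by omega) (by omega)] at v1
  rw [emod_eq_of_small b (by omega) (by omega)] at v2
  split_ifs at v1 v2 <;> omega

lemma rep_of_adj {N h : ℕ} [NeZero N] (hN : 3*h < N) {x : ZMod N}
    (hx : (circulant N (2*h)).Adj 0 x) : ∃ a : ℤ, a.natAbs ≤ h ∧ a ≠ 0 ∧ (a : ZMod N) = x := by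
  rw [circulant_adj] at hx
  unfold circDist at hx
  have hNpos : 0 < N := Nat.pos_of_ne_zero (NeZero.ne N)
  have hxv : ((x.val : ℤ) : ZMod N) = x := by
    push_cast
    exact ZMod.natCast_zmod_val x
  have hvlt : x.val < N := ZMod.val_lt x
  have hz : (0 - x) = (((-(x.val : ℤ)) : ℤ) : ZMod N) := by
    have e : (((-(x.val : ℤ)) : ℤ) : ZMod N) = -(((x.val : ℤ) : ℤ) : ZMod N) := by
      push_cast; ring
    rw [e, hxv]; ring
  have hx0 : (x - 0) = x := by ring
  rw [hz, hx0] at hx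
  have v1 := ZMod.val_intCast (n := N) (-(x.val : ℤ))
  rw [emod_eq_of_small (-(x.val:ℤ)) (by omega) (by omega)] at v1
  have h2 : 2*h/2 = h := by omega
  rw [h2] at hx
  by_cases hc : x.val ≤ h
  · refine ⟨(x.val : ℤ), by omega, ?_, hxv⟩
    split_ifs at v1 <;>
    · rcases Nat.le_total ((((-(x.val : ℤ)) : ℤ) : ZMod N)).val x.val with hxy | hxy
      · rw [min_eq_left hxy] at hx; omega
      · rw [min_eq_right hxy] at hx; omega
  · refine ⟨(x.val : ℤ) - N, ?_, by omega, ?_⟩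
    · split_ifs at v1 <;>
      · rcases Nat.le_total ((((-(x.val : ℤ)) : ℤ) : ZMod N)).val x.val with hxy | hxy
        · rw [min_eq_left hxy] at hx; omega
        · rw [min_eq_right hxy] at hx; omega
    · have e : (((x.val : ℤ) - N : ℤ) : ZMod N)
          = (((x.val : ℤ) : ℤ) : ZMod N) - (((N : ℤ) : ℤ) : ZMod N) := by push_cast; ring
      rw [e, hxv]
      simp [ZMod.natCast_self]

noncomputable def ASet (h : ℕ) : Finset ℤ := (Finset.Icc (-(h:ℤ)) h).erase 0

lemma mem_ASet {h : ℕ} {a : ℤ} : a ∈ ASet h ↔ a ≠ 0 ∧ a.natAbs ≤ h := by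
  simp [ASet, Finset.mem_Icc]
  omega

lemma ASet_card (h : ℕ) : (ASet h).card = 2*h := by
  rw [ASet, Finset.card_erase_of_mem (by simp [Finset.mem_Icc]), Int.card_Icc]
  omega

lemma inner_count {h : ℕ} {a : ℤ} (ha : a ∈ ASet h) :
    ((ASet h).filter (fun b => a ≠ b ∧ (a - b).natAbs ≤ h)).card = 2*h - a.natAbs - 1 := by
  rw [mem_ASet] at ha
  have hset : (ASet h).filter (fun b => a ≠ b ∧ (a - b).natAbs ≤ h)
      = ((Finset.Icc (max (-(h:ℤ)) (a - h)) (min (h:ℤ) (a + h))).erase 0).erase a := by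
    ext b
    simp [mem_ASet, Finset.mem_Icc, Finset.mem_erase]
    omega
  rw [hset]
  rw [Finset.card_erase_of_mem, Finset.card_erase_of_mem, Int.card_Icc]
  · omega
  · simp [Finset.mem_Icc]; omega
  · simp [Finset.mem_Icc, Finset.mem_erase]; omega

lemma count_main (h : ℕ) :
    ((ASet h ×ˢ ASet h).filter
      (fun p : ℤ × ℤ => p.1 ≠ p.2 ∧ (p.1 - p.2).natAbs ≤ h)).card = 3*(h*(h-1)) := by
  have key : ((ASet h ×ˢ ASet h).filter
      (fun p : ℤ × ℤ => p.1 ≠ p.2 ∧ (p.1 - p.2).natAbs ≤ h)).card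
      = ∑ a ∈ ASet h, ((ASet h).filter (fun b => a ≠ b ∧ (a - b).natAbs ≤ h)).card := by
    rw [Finset.card_filter, Finset.sum_product]
    exact Finset.sum_congr rfl fun a _ => (Finset.card_filter _ _).symm
  have step1 : ∑ a ∈ ASet h, ((ASet h).filter (fun b => a ≠ b ∧ (a - b).natAbs ≤ h)).card
      = ∑ a ∈ ASet h, (2*h - a.natAbs - 1) :=
    Finset.sum_congr rfl fun a ha => inner_count ha
  rw [key, step1]
  -- split ASet into negative and positive parts
  have hsplit : ASet h = Finset.Icc (-(h:ℤ)) (-1) ∪ Finset.Icc 1 (h:ℤ) := by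
    ext a; simp [mem_ASet, Finset.mem_Icc]; omega
  have hdisj : Disjoint (Finset.Icc (-(h:ℤ)) (-1)) (Finset.Icc 1 (h:ℤ)) := by
    rw [Finset.disjoint_left]; intro a ha hb
    simp [Finset.mem_Icc] at ha hb; omega
  rw [hsplit, Finset.sum_union hdisj]
  have hneg : Finset.Icc (-(h:ℤ)) (-1) = (Finset.Icc (1:ℤ) h).image Neg.neg := by
    ext a
    simp [Finset.mem_Icc]
    constructor
    · intro ha; exact ⟨-a, by omega, by omega⟩
    · rintro ⟨b, hb, rfl⟩; omega
  rw [hneg, Finset.sum_image (by intro x _ y _ hxy; omega)]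
  simp only [Int.natAbs_neg]
  have hpos : Finset.Icc (1:ℤ) h = (Finset.Icc 1 h).image (Nat.cast : ℕ → ℤ) := by
    ext a
    simp [Finset.mem_Icc]
    constructor
    · intro ha; exact ⟨a.toNat, by omega, by omega⟩
    · rintro ⟨b, hb, rfl⟩; omega
  rw [hpos, Finset.sum_image (by intro x _ y _ hxy; omega)]
  simp only [Int.natAbs_natCast]
  have hIcc : ∑ a ∈ Finset.Icc 1 h, (2*h - a - 1) = ∑ i ∈ Finset.range h, (2*h - (1+i) - 1) := by
    rw [show Finset.Icc 1 h = Finset.Ico 1 (h+1) from by rw [Finset.Ico_add_one_right_eq_Icc],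
      Finset.sum_Ico_eq_sum_range]
    simp
  have hre : ∑ i ∈ Finset.range h, (2*h - (1+i) - 1) = ∑ i ∈ Finset.range h, ((h - 1 - i) + (h-1)) := by
    refine Finset.sum_congr rfl fun i hi => ?_
    rw [Finset.mem_range] at hi
    omega
  have hrefl : ∑ i ∈ Finset.range h, (h - 1 - i) = ∑ i ∈ Finset.range h, i := by
    exact Finset.sum_range_reflect (fun j => j) h
  have hgauss : (∑ i ∈ Finset.range h, i) * 2 = h * (h - 1) := Finset.sum_range_id_mul_two h
  rw [hIcc, hre, Finset.sum_add_distrib, hrefl, Finset.sum_const, Finset.card_range, smul_eq_mul]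
  omega

lemma circ_adj_add {N k : ℕ} (t i j : ZMod N) :
    (circulant N k).Adj (t + i) (t + j) ↔ (circulant N k).Adj i j := by
  rw [circulant_adj, circulant_adj]
  unfold circDist
  have e1 : t + i - (t + j) = i - j := by ring
  have e2 : t + j - (t + i) = j - i := by ring
  rw [e1, e2]

lemma circ_nbr_card {N h : ℕ} [NeZero N] (hN : 3*h < N) (v : ZMod N) :
    (Finset.univ.filter (fun j => (circulant N (2*h)).Adj v j)).card = 2*h := by
  have main : (ASet h).card
      = (Finset.univ.filter (fun j => (circulant N (2*h)).Adj v j)).card := by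
    refine Finset.card_bij (fun a _ => v + (a : ZMod N)) ?_ ?_ ?_
    · intro a ha
      rw [mem_ASet] at ha
      rw [Finset.mem_filter]
      refine ⟨Finset.mem_univ _, ?_⟩
      have key : (circulant N (2*h)).Adj (v + ((0 : ℤ) : ZMod N)) (v + (a : ZMod N)) := by
        rw [circ_adj_add, circ_adj_iff hN (by simp) ha.2]
        exact ⟨fun hc => ha.1 hc.symm, by simpa using ha.2⟩
      simpa using key
    · intro a ha b hb hab
      rw [mem_ASet] at ha hb
      exact cast_inj_of_small hN ha.2 hb.2 (by exact add_left_cancel hab)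
    · intro j hj
      rw [Finset.mem_filter] at hj
      have hadj : (circulant N (2*h)).Adj 0 (j - v) := by
        have : (circulant N (2*h)).Adj (v + 0) (v + (j - v)) := by
          simpa using hj.2
        rwa [circ_adj_add] at this
      obtain ⟨a, ha1, ha2, ha3⟩ := rep_of_adj hN hadj
      refine ⟨a, mem_ASet.mpr ⟨ha2, ha1⟩, ?_⟩
      show v + (a : ZMod N) = j
      rw [ha3]; ring
  rw [← main, ASet_card]

lemma fin_cast_eq_iff {N : ℕ} [NeZero N] {p : Fin N} {v : ZMod N} :
    ((p : ℕ) : ZMod N) = v ↔ p = ⟨v.val, ZMod.val_lt v⟩ := by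
  constructor
  · intro hpv
    have : (((p : ℕ) : ZMod N)).val = v.val := by rw [hpv]
    rw [ZMod.val_natCast, Nat.mod_eq_of_lt p.isLt] at this
    exact Fin.ext this
  · rintro rfl
    simp [ZMod.natCast_zmod_val]

lemma deg_inl {N h : ℕ} [NeZero N] (hN : 3*h < N) (v : ZMod N) :
    (typeI N (2*h) N 1).degree (Sum.inl v) = 2*h + 1 := by
  rw [SimpleGraph.degree, SimpleGraph.neighborFinset_eq_filter,
    ← Finset.card_toLeft_add_card_toRight]
  have hL : (Finset.univ.filter ((typeI N (2*h) N 1).Adj (Sum.inl v))).toLeft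
      = Finset.univ.filter (fun j => (circulant N (2*h)).Adj v j) := by
    ext j
    simp only [Finset.mem_toLeft, Finset.mem_filter, Finset.mem_univ, true_and]
    exact typeI_adj_inl_inl
  have hR : (Finset.univ.filter ((typeI N (2*h) N 1).Adj (Sum.inl v))).toRight
      = {(⟨v.val, ZMod.val_lt v⟩, (0 : Fin 1))} := by
    ext z
    simp only [Finset.mem_toRight, Finset.mem_filter, Finset.mem_univ, true_and,
      Finset.mem_singleton, typeI_adj_inl_inr]
    rw [fin_cast_eq_iff]
    constructor
    · intro hz
      exact Prod.ext hz (Subsingleton.elim _ _)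
    · rintro rfl
      rfl
  rw [hL, hR, circ_nbr_card hN, Finset.card_singleton]

lemma deg_inr {N h : ℕ} [NeZero N] (z : Fin N × Fin 1) :
    (typeI N (2*h) N 1).degree (Sum.inr z) = 1 := by
  rw [SimpleGraph.degree, SimpleGraph.neighborFinset_eq_filter,
    ← Finset.card_toLeft_add_card_toRight]
  have hL : (Finset.univ.filter ((typeI N (2*h) N 1).Adj (Sum.inr z))).toLeft
      = {((z.1 : ℕ) : ZMod N)} := by
    ext i
    simp only [Finset.mem_toLeft, Finset.mem_filter, Finset.mem_univ, true_and,
      Finset.mem_singleton, typeI_adj_inr, Sum.inl.injEq]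
    try exact eq_comm
  have hR : (Finset.univ.filter ((typeI N (2*h) N 1).Adj (Sum.inr z))).toRight = ∅ := by
    ext w
    simp [typeI_adj_inr]
  rw [hL, hR, Finset.card_singleton, Finset.card_empty]


lemma nbrEdges_inr {N h : ℕ} [NeZero N] (z : Fin N × Fin 1) :
    nbrEdges (typeI N (2*h) N 1) (Sum.inr z) = 0 := by
  unfold nbrEdges
  have : (Finset.univ.filter fun p : (ZMod N ⊕ Fin N × Fin 1) × (ZMod N ⊕ Fin N × Fin 1) =>
      (typeI N (2*h) N 1).Adj (Sum.inr z) p.1 ∧ (typeI N (2*h) N 1).Adj (Sum.inr z) p.2 ∧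
      (typeI N (2*h) N 1).Adj p.1 p.2) = ∅ := by
    rw [Finset.filter_eq_empty_iff]
    rintro ⟨x, y⟩ -
    rintro ⟨h1, h2, h3⟩
    rw [typeI_adj_inr] at h1 h2
    subst h1; subst h2
    exact (typeI N (2*h) N 1).irrefl h3
  rw [this]
  simp

lemma nbrEdges_inl {N h : ℕ} [NeZero N] (hN : 3*h < N) (v : ZMod N) :
    nbrEdges (typeI N (2*h) N 1) (Sum.inl v) = 3*(h*(h-1))/2 := by
  unfold nbrEdges
  congr 1
  rw [← count_main h]
  apply Eq.symm
  refine Finset.card_bij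
    (fun p _ => (Sum.inl (v + (p.1 : ZMod N)), Sum.inl (v + (p.2 : ZMod N)))) ?_ ?_ ?_
  · rintro ⟨a, b⟩ hp
    rw [Finset.mem_filter, Finset.mem_product] at hp
    obtain ⟨⟨ha, hb⟩, hab, hd⟩ := hp
    rw [mem_ASet] at ha hb
    rw [Finset.mem_filter]
    refine ⟨Finset.mem_univ _, ?_, ?_, ?_⟩
    · show (typeI N (2*h) N 1).Adj (Sum.inl v) (Sum.inl (v + (a : ZMod N)))
      rw [typeI_adj_inl_inl]
      have key : (circulant N (2*h)).Adj (v + ((0 : ℤ) : ZMod N)) (v + (a : ZMod N)) := by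
        rw [circ_adj_add, circ_adj_iff hN (by simp) ha.2]
        exact ⟨fun hc => ha.1 hc.symm, by simpa using ha.2⟩
      simpa using key
    · show (typeI N (2*h) N 1).Adj (Sum.inl v) (Sum.inl (v + (b : ZMod N)))
      rw [typeI_adj_inl_inl]
      have key : (circulant N (2*h)).Adj (v + ((0 : ℤ) : ZMod N)) (v + (b : ZMod N)) := by
        rw [circ_adj_add, circ_adj_iff hN (by simp) hb.2]
        exact ⟨fun hc => hb.1 hc.symm, by simpa using hb.2⟩
      simpa using key
    · show (typeI N (2*h) N 1).Adj (Sum.inl (v + (a : ZMod N))) (Sum.inl (v + (b : ZMod N)))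
      rw [typeI_adj_inl_inl, circ_adj_add, circ_adj_iff hN ha.2 hb.2]
      exact ⟨hab, hd⟩
  · rintro ⟨a, b⟩ hp ⟨a', b'⟩ hp' heq
    rw [Finset.mem_filter, Finset.mem_product] at hp hp'
    simp only [Prod.mk.injEq, Sum.inl.injEq] at heq
    have ha := mem_ASet.mp hp.1.1
    have hb := mem_ASet.mp hp.1.2
    have ha' := mem_ASet.mp hp'.1.1
    have hb' := mem_ASet.mp hp'.1.2
    have e1 : a = a' := cast_inj_of_small hN ha.2 ha'.2 (add_left_cancel heq.1)
    have e2 : b = b' := cast_inj_of_small hN hb.2 hb'.2 (add_left_cancel heq.2)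
    rw [e1, e2]
  · rintro ⟨x, y⟩ hp
    rw [Finset.mem_filter] at hp
    obtain ⟨-, h1, h2, h3⟩ := hp
    dsimp only at h1 h2 h3
    -- x and y must both be inl
    obtain ⟨x', rfl⟩ : ∃ x', x = Sum.inl x' := by
      rcases x with x' | w
      · exact ⟨x', rfl⟩
      · exfalso
        rw [typeI_adj_inl_inr] at h1
        rw [typeI_adj_inr] at h3
        subst h3
        rw [h1] at h2
        exact (typeI N (2*h) N 1).irrefl h2
    obtain ⟨y', rfl⟩ : ∃ y', y = Sum.inl y' := by
      rcases y with y' | w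
      · exact ⟨y', rfl⟩
      · exfalso
        rw [typeI_adj_inl_inr] at h2
        have h3' := ((typeI N (2*h) N 1).adj_comm _ _).mp h3
        rw [typeI_adj_inr] at h3'
        rw [Sum.inl.injEq] at h3'
        rw [h3', h2] at h1
        exact (typeI N (2*h) N 1).irrefl h1
    rw [typeI_adj_inl_inl] at h1 h2 h3
    have hax : (circulant N (2*h)).Adj 0 (x' - v) := by
      have : (circulant N (2*h)).Adj (v + 0) (v + (x' - v)) := by simpa using h1
      rwa [circ_adj_add] at this
    have hay : (circulant N (2*h)).Adj 0 (y' - v) := by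
      have : (circulant N (2*h)).Adj (v + 0) (v + (y' - v)) := by simpa using h2
      rwa [circ_adj_add] at this
    obtain ⟨a, ha1, ha2, ha3⟩ := rep_of_adj hN hax
    obtain ⟨b, hb1, hb2, hb3⟩ := rep_of_adj hN hay
    have hxa : v + (a : ZMod N) = x' := by rw [ha3]; ring
    have hyb : v + (b : ZMod N) = y' := by rw [hb3]; ring
    have h3' : (circulant N (2*h)).Adj (v + (a : ZMod N)) (v + (b : ZMod N)) := by
      rw [hxa, hyb]; exact h3
    rw [circ_adj_add, circ_adj_iff hN ha1 hb1] at h3'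
    refine ⟨(a, b), ?_, ?_⟩
    · rw [Finset.mem_filter, Finset.mem_product]
      exact ⟨⟨mem_ASet.mpr ⟨ha2, ha1⟩, mem_ASet.mpr ⟨hb2, hb1⟩⟩, h3'.1, h3'.2⟩
    · show (Sum.inl (v + (a : ZMod N)), Sum.inl (v + (b : ZMod N)))
        = ((Sum.inl x' : ZMod N ⊕ Fin N × Fin 1), Sum.inl y')
      rw [hxa, hyb]


theorem stmt7 (N k : ℕ) [NeZero N] (hke : Even k) (hk4 : 4 ≤ k) (hN : 2 * N > 3 * k) :
    clusteringCoeff (typeI N k N 1) = 3 * ((k : ℚ) - 2) / (8 * ((k : ℚ) + 1)) := by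
  obtain ⟨h, rfl⟩ : ∃ h, k = 2 * h := by
    obtain ⟨m, hm⟩ := hke; exact ⟨m, by omega⟩
  have hh2 : 2 ≤ h := by omega
  have hN3 : 3 * h < N := by omega
  obtain ⟨m, hm⟩ : ∃ m, h * (h - 1) = 2 * m := by
    have := Nat.even_mul_succ_self (h - 1)
    rw [show h - 1 + 1 = h from by omega] at this
    obtain ⟨m, hm⟩ := this
    exact ⟨m, by rw [mul_comm]; omega⟩
  have hc : ((3 * (h * (h - 1)) / 2 : ℕ) : ℚ) = 3 * (h : ℚ) * ((h : ℚ) - 1) / 2 := by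
    rw [hm, show 3 * (2 * m) / 2 = 3 * m from by omega]
    have hmq : (h : ℚ) * ((h : ℚ) - 1) = 2 * (m : ℚ) := by
      have : ((h * (h - 1) : ℕ) : ℚ) = ((2 * m : ℕ) : ℚ) := by rw [hm]
      rwa [Nat.cast_mul, Nat.cast_mul, Nat.cast_sub (by omega), Nat.cast_one,
        Nat.cast_two] at this
    push_cast
    linear_combination (-3/2 : ℚ) * hmq
  have hch : (((2 * h + 1).choose 2 : ℕ) : ℚ) = (h : ℚ) * (2 * (h : ℚ) + 1) := by
    rw [Nat.choose_two_right, Nat.add_sub_cancel,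
      show (2 * h + 1) * (2 * h) = h * (2 * h + 1) * 2 from by ring,
      Nat.mul_div_cancel _ two_pos]
    push_cast
    ring
  unfold clusteringCoeff
  rw [Fintype.sum_sum_type]
  have hinl : ∀ i : ZMod N, localClustering (typeI N (2 * h) N 1) (Sum.inl i)
      = ((3 * (h * (h - 1)) / 2 : ℕ) : ℚ) / (((2 * h + 1).choose 2 : ℕ) : ℚ) := by
    intro i
    unfold localClustering
    rw [nbrEdges_inl hN3, deg_inl hN3]
  have hinr : ∀ z : Fin N × Fin 1,
      localClustering (typeI N (2 * h) N 1) (Sum.inr z) = 0 := by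
    intro z
    unfold localClustering
    rw [nbrEdges_inr]
    simp
  simp only [hinl, hinr, Finset.sum_const, Finset.card_univ, ZMod.card, smul_eq_mul,
    Finset.sum_const_zero, add_zero, Fintype.card_sum, Fintype.card_prod, Fintype.card_fin,
    ZMod.card]
  rw [hc, hch]
  have hNq : (N : ℚ) ≠ 0 := Nat.cast_ne_zero.mpr (NeZero.ne N)
  have hhq : (h : ℚ) ≠ 0 := Nat.cast_ne_zero.mpr (by omega)
  simp only [smul_zero, add_zero, nsmul_eq_mul]
  push_cast
  field_simp
  ring
end

section
/- With k ≥ 4 even, N > k, m ≥ 1, r = min(N-k-1, k/2), and A = C(k,2) - kr/2 + r(r-1)/2 > 0, the clustering coefficient of the Type III graph E_{N,k,m}, given by [(N-m)·A/C(k,2) + m·A/C(k+1,2)]/(N+1), is strictly less than the clustering coefficient A/C(k,2) of C_{N,k}, and is strictly decreasing in m. -/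
open scoped Classical

theorem stmt15 (N k : ℕ) (hke : Even k) (hk4 : 4 ≤ k) (hN : k < N)
    (r : ℕ) (hr : r = min (N - k - 1) (k / 2))
    (A : ℚ) (hA : A = (k.choose 2 : ℚ) - k * r / 2 + r * (r - 1) / 2) (hApos : 0 < A)
    (E : ℕ → ℚ)
    (hE : ∀ m : ℕ, E m =
      (((N : ℚ) - m) * A / (k.choose 2 : ℚ) + m * A / ((k + 1).choose 2 : ℚ))
        / ((N : ℚ) + 1)) :
    (∀ m : ℕ, 1 ≤ m → E m < A / (k.choose 2 : ℚ)) ∧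
    (∀ m₁ m₂ : ℕ, 1 ≤ m₁ → m₁ < m₂ → E m₂ < E m₁) := by
  have hCpos : (0:ℚ) < (k.choose 2 : ℚ) := by
    have : 0 < k.choose 2 := Nat.choose_pos (by omega)
    exact_mod_cast this
  have hC'pos : (0:ℚ) < ((k+1).choose 2 : ℚ) := by
    have : 0 < (k+1).choose 2 := Nat.choose_pos (by omega)
    exact_mod_cast this
  have hCC : (k.choose 2 : ℚ) < ((k+1).choose 2 : ℚ) := by
    have h : (k+1).choose 2 = k.choose 1 + k.choose 2 := Nat.choose_succ_succ k 1
    have hk1 : k.choose 1 = k := Nat.choose_one_right k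
    have : k.choose 2 < (k+1).choose 2 := by omega
    exact_mod_cast this
  have hdivpos : 0 < A / (k.choose 2 : ℚ) := div_pos hApos hCpos
  have hdiff : A / ((k+1).choose 2 : ℚ) < A / (k.choose 2 : ℚ) :=
    div_lt_div_of_pos_left hApos hCpos hCC
  have hN1 : (0:ℚ) < (N:ℚ) + 1 := by positivity
  constructor
  · intro m hm
    rw [hE, div_lt_iff₀ hN1]
    have hm' : (1:ℚ) ≤ (m:ℚ) := by exact_mod_cast hm
    have key : (m:ℚ) * (A / ((k+1).choose 2 : ℚ)) < m * (A / (k.choose 2 : ℚ)) :=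
      mul_lt_mul_of_pos_left hdiff (by linarith)
    have e1 : ((N:ℚ) - m) * A / (k.choose 2 : ℚ) + m * A / ((k+1).choose 2 : ℚ)
        = ((N:ℚ) - m) * (A / (k.choose 2 : ℚ)) + m * (A / ((k+1).choose 2 : ℚ)) := by
      ring
    rw [e1]
    nlinarith [hdivpos, key]
  · intro m₁ m₂ hm₁ hlt
    have hm : (m₁:ℚ) < (m₂:ℚ) := by exact_mod_cast hlt
    have e2 : ∀ x : ℚ, ((N:ℚ) - x) * A / (k.choose 2 : ℚ) + x * A / ((k+1).choose 2 : ℚ)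
        = (N:ℚ) * (A / (k.choose 2 : ℚ)) + x * (A / ((k+1).choose 2 : ℚ) - A / (k.choose 2 : ℚ)) :=
      fun x => by ring
    have hnum : ((N:ℚ) - m₂) * A / (k.choose 2 : ℚ) + m₂ * A / ((k+1).choose 2 : ℚ)
        < ((N:ℚ) - m₁) * A / (k.choose 2 : ℚ) + m₁ * A / ((k+1).choose 2 : ℚ) := by
      rw [e2, e2]
      have hneg : A / ((k+1).choose 2 : ℚ) - A / (k.choose 2 : ℚ) < 0 := by linarith
      have := mul_lt_mul_of_neg_right hm hneg
      linarith
    rw [hE, hE]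
    exact div_lt_div_of_pos_right hnum hN1
end
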